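/- arXiv:2109.10018 — 2 statements merged into one kernel-verified Lean document; each statement's English description precedes it below -/
import Mathlib

section
/- Let (X_0, X_1, …) be an acceptable sequence of elements of MCS_χ and let n ≥ 0. Then: (1) if φ S ψ ∈ X_n, then there exists m ≤ n such that ψ ∈ X_m and φ ∈ X_k for all k with m < k ≤ n; (2) if φ S ψ ∈ Subf⁺(χ) and there exists m ≤ n such that ψ ∈ X_m and φ ∈ X_k for all k with m < k ≤ n, then φ S ψ ∈ X_n. -/
namespace JTO

/-- Epistemic justification terms. -/
inductive TmE (Const Var : Type) : Type
  | const : Const → TmE Const Var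
  | var   : Var → TmE Const Var
  | bang  : TmE Const Var → TmE Const Var
  | plus  : TmE Const Var → TmE Const Var → TmE Const Var
  | times : TmE Const Var → TmE Const Var → TmE Const Var

/-- Deontic (normative) justification terms. -/
inductive TmO (Const Var : Type) : Type
  | const : Const → TmO Const Var
  | var   : Var → TmO Const Var
  | ddag  : TmO Const Var → TmO Const Var
  | times : TmO Const Var → TmO Const Var → TmO Const Var

/-- Formulas of the logic JTO. -/
inductive Fm (Ag Const Var Atom : Type) : Type
  | atom  : Atom → Fm Ag Const Var Atom
  | bot   : Fm Ag Const Var Atom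
  | imp   : Fm Ag Const Var Atom → Fm Ag Const Var Atom → Fm Ag Const Var Atom
  | next  : Fm Ag Const Var Atom → Fm Ag Const Var Atom
  | wprev : Fm Ag Const Var Atom → Fm Ag Const Var Atom
  | untl  : Fm Ag Const Var Atom → Fm Ag Const Var Atom → Fm Ag Const Var Atom
  | snce  : Fm Ag Const Var Atom → Fm Ag Const Var Atom → Fm Ag Const Var Atom
  | jbox  : Ag → TmE Const Var → Fm Ag Const Var Atom → Fm Ag Const Var Atom
  | obox  : Ag → TmO Const Var → Fm Ag Const Var Atom → Fm Ag Const Var Atom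

namespace Fm

variable {Ag Const Var Atom : Type}

/-- ¬φ := φ → ⊥ -/
def neg (φ : Fm Ag Const Var Atom) : Fm Ag Const Var Atom := φ.imp bot
/-- ⊤ := ¬⊥ -/
def top : Fm Ag Const Var Atom := neg bot
/-- φ ∨ ψ := ¬φ → ψ -/
def disj (φ ψ : Fm Ag Const Var Atom) : Fm Ag Const Var Atom := (neg φ).imp ψ
/-- φ ∧ ψ := ¬(¬φ ∨ ¬ψ) -/
def conj (φ ψ : Fm Ag Const Var Atom) : Fm Ag Const Var Atom := neg (disj (neg φ) (neg ψ))
/-- φ ↔ ψ := (φ→ψ) ∧ (ψ→φ) -/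
def biim (φ ψ : Fm Ag Const Var Atom) : Fm Ag Const Var Atom := conj (φ.imp ψ) (ψ.imp φ)
/-- strong previous ⊙ₛφ := ¬⊙_w¬φ -/
def sprev (φ : Fm Ag Const Var Atom) : Fm Ag Const Var Atom := neg (wprev (neg φ))
/-- eventually ◇φ := ⊤ U φ -/
def ev (φ : Fm Ag Const Var Atom) : Fm Ag Const Var Atom := untl top φ
/-- always (henceforth) □φ := ¬◇¬φ -/
def alw (φ : Fm Ag Const Var Atom) : Fm Ag Const Var Atom := neg (ev (neg φ))
/-- once ◇⁻φ := ⊤ S φ -/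
def once (φ : Fm Ag Const Var Atom) : Fm Ag Const Var Atom := snce top φ
/-- has-always-been □⁻φ := ¬◇⁻¬φ -/
def sofar (φ : Fm Ag Const Var Atom) : Fm Ag Const Var Atom := neg (once (neg φ))
/-- ⊡φ := □⁻φ ∧ □φ -/
def boxdot (φ : Fm Ag Const Var Atom) : Fm Ag Const Var Atom := conj (sofar φ) (alw φ)
/-- weak until (unless) φ W ψ := (φ U ψ) ∨ □φ -/
def wuntl (φ ψ : Fm Ag Const Var Atom) : Fm Ag Const Var Atom := disj (untl φ ψ) (alw φ)
/-- permission P[s]ᵢφ := ¬O[s]ᵢ¬φ -/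
def pbox (i : Ag) (t : TmO Const Var) (φ : Fm Ag Const Var Atom) : Fm Ag Const Var Atom :=
  neg (obox i t (neg φ))
/-- time = m, i.e. ⊙ₛ^m ⊙_w ⊥ -/
def timeEq : ℕ → Fm Ag Const Var Atom
  | 0 => wprev bot
  | m + 1 => sprev (timeEq m)
/-- true_m(φ) := ⊡(time=m → φ) -/
def trueAt (m : ℕ) (φ : Fm Ag Const Var Atom) : Fm Ag Const Var Atom :=
  boxdot ((timeEq m).imp φ)

/-- Subformulas. -/
def subf : Fm Ag Const Var Atom → Set (Fm Ag Const Var Atom)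
  | atom p => {atom p}
  | bot => {bot}
  | imp φ ψ => insert (imp φ ψ) (subf φ ∪ subf ψ)
  | next φ => insert (next φ) (subf φ)
  | wprev φ => insert (wprev φ) (subf φ)
  | untl φ ψ => insert (untl φ ψ) (subf φ ∪ subf ψ)
  | snce φ ψ => insert (snce φ ψ) (subf φ ∪ subf ψ)
  | jbox i t φ => insert (jbox i t φ) (subf φ)
  | obox i t φ => insert (obox i t φ) (subf φ)

/-- Subf⁺(χ) := A_χ ∪ {¬ψ : ψ ∈ A_χ}, with A_χ = Subf(χ) ∪ Subf(⊤ S ⊙_w⊥). -/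
def subfPlus (χ : Fm Ag Const Var Atom) : Set (Fm Ag Const Var Atom) :=
  (subf χ ∪ subf (snce top (wprev bot))) ∪ neg '' (subf χ ∪ subf (snce top (wprev bot)))

end Fm

variable {Ag Const Var Atom : Type}

/-- Propositional tautologies in the language of JTO. -/
def Taut (φ : Fm Ag Const Var Atom) : Prop :=
  ∀ v : Fm Ag Const Var Atom → Bool,
    v Fm.bot = false → (∀ a b, v (a.imp b) = (!(v a) || v b)) → v φ = true

/-- The axioms of JTO. -/
inductive IsAxiom : Fm Ag Const Var Atom → Prop
  | taut {φ : Fm Ag Const Var Atom} : Taut φ → IsAxiom φ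
  | nextK (φ ψ : Fm Ag Const Var Atom) :
      IsAxiom ((Fm.next (φ.imp ψ)).imp ((Fm.next φ).imp (Fm.next ψ)))
  | alwK (φ ψ : Fm Ag Const Var Atom) :
      IsAxiom ((Fm.alw (φ.imp ψ)).imp ((Fm.alw φ).imp (Fm.alw ψ)))
  | fn (φ : Fm Ag Const Var Atom) :
      IsAxiom (Fm.biim (Fm.next (Fm.neg φ)) (Fm.neg (Fm.next φ)))
  | ind (φ : Fm Ag Const Var Atom) :
      IsAxiom ((Fm.alw (φ.imp (Fm.next φ))).imp (φ.imp (Fm.alw φ)))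
  | untl1 (φ ψ : Fm Ag Const Var Atom) :
      IsAxiom ((Fm.untl φ ψ).imp (Fm.ev ψ))
  | untl2 (φ ψ : Fm Ag Const Var Atom) :
      IsAxiom (Fm.biim (Fm.untl φ ψ) (Fm.disj ψ (Fm.conj φ (Fm.next (Fm.untl φ ψ)))))
  | sofarK (φ ψ : Fm Ag Const Var Atom) :
      IsAxiom ((Fm.sofar (φ.imp ψ)).imp ((Fm.sofar φ).imp (Fm.sofar ψ)))
  | wprevK (φ ψ : Fm Ag Const Var Atom) :
      IsAxiom ((Fm.wprev (φ.imp ψ)).imp ((Fm.wprev φ).imp (Fm.wprev ψ)))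
  | sw (φ : Fm Ag Const Var Atom) : IsAxiom ((Fm.sprev φ).imp (Fm.wprev φ))
  | initial : IsAxiom (Fm.once (Fm.wprev (Fm.bot : Fm Ag Const Var Atom)))
  | sofarInd (φ : Fm Ag Const Var Atom) :
      IsAxiom ((Fm.sofar (φ.imp (Fm.wprev φ))).imp (φ.imp (Fm.sofar φ)))
  | snce1 (φ ψ : Fm Ag Const Var Atom) : IsAxiom ((Fm.snce φ ψ).imp (Fm.once ψ))
  | snce2 (φ ψ : Fm Ag Const Var Atom) :
      IsAxiom (Fm.biim (Fm.snce φ ψ) (Fm.disj ψ (Fm.conj φ (Fm.sprev (Fm.snce φ ψ)))))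
  | fp (φ : Fm Ag Const Var Atom) : IsAxiom (φ.imp (Fm.next (Fm.sprev φ)))
  | pf (φ : Fm Ag Const Var Atom) : IsAxiom (φ.imp (Fm.wprev (Fm.next φ)))
  | app (i : Ag) (t s : TmE Const Var) (φ ψ : Fm Ag Const Var Atom) :
      IsAxiom ((Fm.jbox i t (φ.imp ψ)).imp ((Fm.jbox i s φ).imp (Fm.jbox i (TmE.times t s) ψ)))
  | sum1 (i : Ag) (t s : TmE Const Var) (φ : Fm Ag Const Var Atom) :
      IsAxiom ((Fm.jbox i t φ).imp (Fm.jbox i (TmE.plus t s) φ))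
  | sum2 (i : Ag) (t s : TmE Const Var) (φ : Fm Ag Const Var Atom) :
      IsAxiom ((Fm.jbox i s φ).imp (Fm.jbox i (TmE.plus t s) φ))
  | fact (i : Ag) (t : TmE Const Var) (φ : Fm Ag Const Var Atom) :
      IsAxiom ((Fm.jbox i t φ).imp φ)
  | pos (i : Ag) (t : TmE Const Var) (φ : Fm Ag Const Var Atom) :
      IsAxiom ((Fm.jbox i t φ).imp (Fm.jbox i (TmE.bang t) (Fm.jbox i t φ)))
  | appO (i : Ag) (t s : TmO Const Var) (φ ψ : Fm Ag Const Var Atom) :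
      IsAxiom ((Fm.obox i t (φ.imp ψ)).imp ((Fm.obox i s φ).imp (Fm.obox i (TmO.times t s) ψ)))
  | noc (i : Ag) (t : TmO Const Var) (φ : Fm Ag Const Var Atom) :
      IsAxiom ((Fm.obox i t φ).imp (Fm.pbox i t φ))
  | ofact (i : Ag) (t : TmO Const Var) (φ : Fm Ag Const Var Atom) :
      IsAxiom (Fm.obox i (TmO.ddag t) ((Fm.obox i t φ).imp φ))

/-- Formulas of the shape [c_{j_n}]_{i_n} … [c_{j_1}]_{i_1} φ with φ an axiom instance, n ≥ 1. -/
inductive EIter : Fm Ag Const Var Atom → Prop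
  | base {i : Ag} {c : Const} {φ : Fm Ag Const Var Atom} :
      IsAxiom φ → EIter (Fm.jbox i (TmE.const c) φ)
  | step {i : Ag} {c : Const} {φ : Fm Ag Const Var Atom} :
      EIter φ → EIter (Fm.jbox i (TmE.const c) φ)

/-- Formulas of the shape O[c_{j_n}]_{i_n} … O[c_{j_1}]_{i_1} φ with φ an axiom instance, n ≥ 1. -/
inductive OIter : Fm Ag Const Var Atom → Prop
  | base {i : Ag} {c : Const} {φ : Fm Ag Const Var Atom} :
      IsAxiom φ → OIter (Fm.obox i (TmO.const c) φ)
  | step {i : Ag} {c : Const} {φ : Fm Ag Const Var Atom} :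
      OIter φ → OIter (Fm.obox i (TmO.const c) φ)

/-- A constant specification: a downward closed set of iterated constant-justification
assertions of axiom instances. -/
structure ConstSpec (Ag Const Var Atom : Type) where
  set : Set (Fm Ag Const Var Atom)
  shape : ∀ φ ∈ set, EIter φ ∨ OIter φ
  dcE : ∀ (i : Ag) (c : Const) (φ : Fm Ag Const Var Atom),
    Fm.jbox i (TmE.const c) φ ∈ set → EIter φ → φ ∈ set
  dcO : ∀ (i : Ag) (c : Const) (φ : Fm Ag Const Var Atom),
    Fm.obox i (TmO.const c) φ ∈ set → OIter φ → φ ∈ set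

/-- CS^E : the epistemic part of a constant specification. -/
def ConstSpec.csE (CS : ConstSpec Ag Const Var Atom) : Set (Fm Ag Const Var Atom) :=
  {φ ∈ CS.set | EIter φ}

/-- CS^O : the deontic part of a constant specification. -/
def ConstSpec.csO (CS : ConstSpec Ag Const Var Atom) : Set (Fm Ag Const Var Atom) :=
  {φ ∈ CS.set | OIter φ}

/-- Derivability in the Hilbert system JTO_CS. -/
inductive Deriv (CS : ConstSpec Ag Const Var Atom) : Fm Ag Const Var Atom → Prop
  | ax {φ : Fm Ag Const Var Atom} : IsAxiom φ → Deriv CS φ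
  | mp {φ ψ : Fm Ag Const Var Atom} : Deriv CS (φ.imp ψ) → Deriv CS φ → Deriv CS ψ
  | necNext {φ : Fm Ag Const Var Atom} : Deriv CS φ → Deriv CS (Fm.next φ)
  | necWPrev {φ : Fm Ag Const Var Atom} : Deriv CS φ → Deriv CS (Fm.wprev φ)
  | necAlw {φ : Fm Ag Const Var Atom} : Deriv CS φ → Deriv CS (Fm.alw φ)
  | necSofar {φ : Fm Ag Const Var Atom} : Deriv CS φ → Deriv CS (Fm.sofar φ)
  | csax {φ : Fm Ag Const Var Atom} : φ ∈ CS.set → Deriv CS φ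

/-- Conjunction of a list of formulas. -/
def conjList : List (Fm Ag Const Var Atom) → Fm Ag Const Var Atom
  | [] => Fm.top
  | φ :: l => Fm.conj φ (conjList l)

/-- T ⊢_CS φ iff ⊢_CS (ψ₁ ∧ … ∧ ψ_n) → φ for some ψ₁, …, ψ_n ∈ T. -/
def DerivFrom (CS : ConstSpec Ag Const Var Atom) (T : Set (Fm Ag Const Var Atom))
    (φ : Fm Ag Const Var Atom) : Prop :=
  ∃ L : List (Fm Ag Const Var Atom), (∀ ψ ∈ L, ψ ∈ T) ∧ Deriv CS ((conjList L).imp φ)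

/-- A set of formulas is consistent if it does not derive ⊥. -/
def Consistent (CS : ConstSpec Ag Const Var Atom) (T : Set (Fm Ag Const Var Atom)) : Prop :=
  ¬ DerivFrom CS T Fm.bot

end JTO
namespace JTO

variable {Ag Const Var Atom : Type}

/-- The data of an F-interpreted system (Fitting-style), without conditions. -/
structure FQuasi (Ag Const Var Atom S : Type) where
  R : Set (ℕ → S)
  K : Ag → S → S → Prop
  KO : Ag → S → S → Prop
  E : Ag → S → TmE Const Var → Set (Fm Ag Const Var Atom)
  EO : Ag → S → TmO Const Var → Set (Fm Ag Const Var Atom)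
  val : S → Set Atom

/-- Truth at a point (r, n) of an F-interpreted system. -/
def FQuasi.Sat {S : Type} (I : FQuasi Ag Const Var Atom S) :
    Fm Ag Const Var Atom → (ℕ → S) → ℕ → Prop
  | .atom p, r, n => p ∈ I.val (r n)
  | .bot, _, _ => False
  | .imp φ ψ, r, n => I.Sat φ r n → I.Sat ψ r n
  | .next φ, r, n => I.Sat φ r (n + 1)
  | .wprev φ, r, n => n = 0 ∨ I.Sat φ r (n - 1)
  | .untl φ ψ, r, n => ∃ m, n ≤ m ∧ I.Sat ψ r m ∧ ∀ k, n ≤ k → k < m → I.Sat φ r k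
  | .snce φ ψ, r, n => ∃ m, m ≤ n ∧ I.Sat ψ r m ∧ ∀ k, m < k → k ≤ n → I.Sat φ r k
  | .jbox i t φ, r, n =>
      φ ∈ I.E i (r n) t ∧ ∀ r' ∈ I.R, ∀ n' : ℕ, I.K i (r n) (r' n') → I.Sat φ r' n'
  | .obox i t φ, r, n =>
      φ ∈ I.EO i (r n) t ∧ ∀ r' ∈ I.R, ∀ n' : ℕ, I.KO i (r n) (r' n') → I.Sat φ r' n'

/-- An F-interpreted system for JTO_CS. -/
structure FIS (Ag Const Var Atom S : Type) (CS : ConstSpec Ag Const Var Atom)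
    extends FQuasi Ag Const Var Atom S where
  Sne : Nonempty S
  Rne : R.Nonempty
  Krefl : ∀ (i : Ag) (w : S), K i w w
  Ktrans : ∀ (i : Ag) (u v w : S), K i u v → K i v w → K i u w
  KOshift : ∀ (i : Ag) (w v : S), KO i w v → KO i v v
  Emono : ∀ (i : Ag) (v w : S) (t : TmE Const Var), K i v w → E i v t ⊆ E i w t
  Ecs : ∀ (i : Ag) (w : S) (t : TmE Const Var) (φ : Fm Ag Const Var Atom),
    Fm.jbox i t φ ∈ CS.csE → φ ∈ E i w t
  Eapp : ∀ (i : Ag) (w : S) (t s : TmE Const Var) (φ ψ : Fm Ag Const Var Atom),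
    φ.imp ψ ∈ E i w t → φ ∈ E i w s → ψ ∈ E i w (TmE.times t s)
  Epos : ∀ (i : Ag) (w : S) (t : TmE Const Var) (φ : Fm Ag Const Var Atom),
    φ ∈ E i w t → Fm.jbox i t φ ∈ E i w (TmE.bang t)
  EOcs : ∀ (i : Ag) (w : S) (t : TmO Const Var) (φ : Fm Ag Const Var Atom),
    Fm.obox i t φ ∈ CS.csO → φ ∈ EO i w t
  EOapp : ∀ (i : Ag) (w : S) (t s : TmO Const Var) (φ ψ : Fm Ag Const Var Atom),
    φ.imp ψ ∈ EO i w t → φ ∈ EO i w s → ψ ∈ EO i w (TmO.times t s)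
  EOcons : ∀ (i : Ag) (w : S) (t : TmO Const Var) (φ : Fm Ag Const Var Atom),
    φ ∈ EO i w t → Fm.neg φ ∉ EO i w t
  EOfact : ∀ (i : Ag) (w : S) (t : TmO Const Var) (φ : Fm Ag Const Var Atom),
    (Fm.obox i t φ).imp φ ∈ EO i w (TmO.ddag t)

/-- Truth at a point of an F-interpreted system. -/
abbrev FIS.Sat {S : Type} {CS : ConstSpec Ag Const Var Atom}
    (I : FIS Ag Const Var Atom S CS) :
    Fm Ag Const Var Atom → (ℕ → S) → ℕ → Prop :=
  I.toFQuasi.Sat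

/-- I ⊨ φ : truth at every point of the system. -/
def FIS.Valid {S : Type} {CS : ConstSpec Ag Const Var Atom}
    (I : FIS Ag Const Var Atom S CS) (φ : Fm Ag Const Var Atom) : Prop :=
  ∀ r ∈ I.R, ∀ n : ℕ, I.Sat φ r n

/-- ⊨_CS φ : validity in all F-interpreted systems for JTO_CS. -/
def FValid (CS : ConstSpec Ag Const Var Atom) (φ : Fm Ag Const Var Atom) : Prop :=
  ∀ (S : Type) (I : FIS Ag Const Var Atom S CS), I.Valid φ

/-- T ⊨_CS φ : the local consequence relation over F-interpreted systems. -/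
def FConseq (CS : ConstSpec Ag Const Var Atom) (T : Set (Fm Ag Const Var Atom))
    (φ : Fm Ag Const Var Atom) : Prop :=
  ∀ (S : Type) (I : FIS Ag Const Var Atom S CS), ∀ r ∈ I.R, ∀ n : ℕ,
    (∀ ψ ∈ T, I.Sat ψ r n) → I.Sat φ r n

/-- Maximal consistent sets of formulas. -/
def MCS (CS : ConstSpec Ag Const Var Atom) : Set (Set (Fm Ag Const Var Atom)) :=
  {Γ | Consistent CS Γ ∧ ∀ Δ, Γ ⊂ Δ → ¬ Consistent CS Δ}

/-- χ-maximal consistent subsets of Subf⁺(χ). -/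
def MCSx (CS : ConstSpec Ag Const Var Atom) (χ : Fm Ag Const Var Atom) :
    Set (Set (Fm Ag Const Var Atom)) :=
  {X | X ⊆ Fm.subfPlus χ ∧ Consistent CS X ∧
    ∀ Y, Y ⊆ Fm.subfPlus χ → X ⊂ Y → ¬ Consistent CS Y}

/-- The relation R_○ on MCS_χ (given by witnessing maximal consistent sets). -/
def Rnext (CS : ConstSpec Ag Const Var Atom) (χ : Fm Ag Const Var Atom)
    (X Y : Set (Fm Ag Const Var Atom)) : Prop :=
  ∃ Γ ∈ MCS CS, ∃ Δ ∈ MCS CS, X = Γ ∩ Fm.subfPlus χ ∧ Y = Δ ∩ Fm.subfPlus χ ∧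
    {φ | Fm.next φ ∈ Γ} ⊆ Δ

/-- Acceptable sequences of elements of MCS_χ. -/
def Acceptable (CS : ConstSpec Ag Const Var Atom) (χ : Fm Ag Const Var Atom)
    (X : ℕ → Set (Fm Ag Const Var Atom)) : Prop :=
  (∀ n, X n ∈ MCSx CS χ) ∧
  (∀ n, Rnext CS χ (X n) (X (n + 1))) ∧
  (∀ n (φ ψ : Fm Ag Const Var Atom), Fm.untl φ ψ ∈ X n →
    ∃ m, n ≤ m ∧ ψ ∈ X m ∧ ∀ k, n ≤ k → k < m → φ ∈ X k) ∧
  Fm.wprev Fm.bot ∈ X 0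

/-- The canonical epistemic accessibility relation. -/
def canK (CS : ConstSpec Ag Const Var Atom) (χ : Fm Ag Const Var Atom) (i : Ag)
    (X Y : Set (Fm Ag Const Var Atom)) : Prop :=
  ∀ Δ ∈ MCS CS, Y = Δ ∩ Fm.subfPlus χ →
    ∃ Γ ∈ MCS CS, X = Γ ∩ Fm.subfPlus χ ∧
      {φ | ∃ t : TmE Const Var, Fm.jbox i t φ ∈ Γ} ⊆ Δ

/-- The canonical evidence function. -/
def canE (CS : ConstSpec Ag Const Var Atom) (χ : Fm Ag Const Var Atom) (i : Ag)
    (X : Set (Fm Ag Const Var Atom)) (t : TmE Const Var) : Set (Fm Ag Const Var Atom) :=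
  {φ | ∀ Γ ∈ MCS CS, X = Γ ∩ Fm.subfPlus χ → Fm.jbox i t φ ∈ Γ}

/-- The canonical deontic accessibility relation. -/
def canKO (CS : ConstSpec Ag Const Var Atom) (χ : Fm Ag Const Var Atom) (i : Ag)
    (X Y : Set (Fm Ag Const Var Atom)) : Prop :=
  ∃ Γ ∈ MCS CS, ∃ Δ ∈ MCS CS, X = Γ ∩ Fm.subfPlus χ ∧ Y = Δ ∩ Fm.subfPlus χ ∧
    {φ | ∃ t : TmO Const Var, Fm.obox i t φ ∈ Γ} ⊆ Δ

/-- The canonical normative evidence function. -/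
def canEO (CS : ConstSpec Ag Const Var Atom) (χ : Fm Ag Const Var Atom) (i : Ag)
    (X : Set (Fm Ag Const Var Atom)) (t : TmO Const Var) : Set (Fm Ag Const Var Atom) :=
  {φ | ∀ Γ ∈ MCS CS, X = Γ ∩ Fm.subfPlus χ → Fm.obox i t φ ∈ Γ}

/-- The χ-canonical F-interpreted system (as structured data). -/
def canFQuasi (CS : ConstSpec Ag Const Var Atom) (χ : Fm Ag Const Var Atom) :
    FQuasi Ag Const Var Atom ↥(MCSx CS χ) where
  R := {r | Acceptable CS χ (fun n => ((r n : Set (Fm Ag Const Var Atom))))}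
  K := fun i X Y => canK CS χ i X.1 Y.1
  KO := fun i X Y => canKO CS χ i X.1 Y.1
  E := fun i X t => canE CS χ i X.1 t
  EO := fun i X t => canEO CS χ i X.1 t
  val := fun X => {p | Fm.atom p ∈ X.1}

end JTO
namespace JTO

variable {Ag Const Var Atom : Type}

/-- The data of a quasi-interpreted-neighborhood system. -/
structure NQuasi (Ag Const Var Atom S : Type) where
  R : Set (ℕ → S)
  N : Ag → S → TmE Const Var → Set (Set S)
  NO : Ag → S → TmO Const Var → Set (Set S)
  val : S → Set Atom
  valF : S → Set (Fm Ag Const Var Atom)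

/-- The image Im(R) of the system of runs. -/
def NQuasi.Im {S : Type} (I : NQuasi Ag Const Var Atom S) : Set S :=
  {w | ∃ r ∈ I.R, ∃ n : ℕ, r n = w}

/-- Truth at a point (r, n) of a quasi-interpreted-neighborhood system. -/
def NQuasi.SatP {S : Type} (I : NQuasi Ag Const Var Atom S) :
    Fm Ag Const Var Atom → (ℕ → S) → ℕ → Prop
  | .atom p, r, n => p ∈ I.val (r n)
  | .bot, _, _ => False
  | .imp φ ψ, r, n => I.SatP φ r n → I.SatP ψ r n
  | .next φ, r, n => I.SatP φ r (n + 1)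
  | .wprev φ, r, n => n = 0 ∨ I.SatP φ r (n - 1)
  | .untl φ ψ, r, n => ∃ m, n ≤ m ∧ I.SatP ψ r m ∧ ∀ k, n ≤ k → k < m → I.SatP φ r k
  | .snce φ ψ, r, n => ∃ m, m ≤ n ∧ I.SatP ψ r m ∧ ∀ k, m < k → k ≤ n → I.SatP φ r k
  | .jbox i t φ, r, n =>
      {w | (∃ r' ∈ I.R, ∃ n' : ℕ, r' n' = w ∧ I.SatP φ r' n') ∨
            (w ∉ I.Im ∧ φ ∈ I.valF w)} ∈ I.N i (r n) t
  | .obox i t φ, r, n =>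
      {w | (∃ r' ∈ I.R, ∃ n' : ℕ, r' n' = w ∧ I.SatP φ r' n') ∨
            (w ∉ I.Im ∧ φ ∈ I.valF w)} ∈ I.NO i (r n) t

/-- Truth at a state of a quasi-interpreted-neighborhood system. -/
def NQuasi.SatS {S : Type} (I : NQuasi Ag Const Var Atom S)
    (φ : Fm Ag Const Var Atom) (w : S) : Prop :=
  (∃ r ∈ I.R, ∃ n : ℕ, r n = w ∧ I.SatP φ r n) ∨ (w ∉ I.Im ∧ φ ∈ I.valF w)

/-- The truth set ⟦φ⟧ of a formula. -/
def NQuasi.tset {S : Type} (I : NQuasi Ag Const Var Atom S)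
    (φ : Fm Ag Const Var Atom) : Set S :=
  {w | I.SatS φ w}

/-- An interpreted-neighborhood system for JTO_CS. -/
structure NIS (Ag Const Var Atom S : Type) (CS : ConstSpec Ag Const Var Atom)
    extends NQuasi Ag Const Var Atom S where
  Sne : Nonempty S
  Rne : R.Nonempty
  Ncs : ∀ (i : Ag) (t : TmE Const Var) (φ : Fm Ag Const Var Atom),
    Fm.jbox i t φ ∈ CS.csE → ∀ w ∈ toNQuasi.Im, toNQuasi.tset φ ∈ N i w t
  Napp : ∀ (i : Ag), ∀ w ∈ toNQuasi.Im, ∀ (t s : TmE Const Var) (φ ψ : Fm Ag Const Var Atom),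
    toNQuasi.tset (φ.imp ψ) ∈ N i w t → toNQuasi.tset φ ∈ N i w s →
      toNQuasi.tset ψ ∈ N i w (TmE.times t s)
  Nsum : ∀ (i : Ag), ∀ w ∈ toNQuasi.Im, ∀ (t s : TmE Const Var) (φ : Fm Ag Const Var Atom),
    toNQuasi.tset φ ∈ N i w s →
      toNQuasi.tset φ ∈ N i w (TmE.plus t s) ∧ toNQuasi.tset φ ∈ N i w (TmE.plus s t)
  Nrefl : ∀ (i : Ag), ∀ w ∈ toNQuasi.Im, ∀ (t : TmE Const Var) (φ : Fm Ag Const Var Atom),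
    toNQuasi.tset φ ∈ N i w t → w ∈ toNQuasi.tset φ
  Npos : ∀ (i : Ag), ∀ w ∈ toNQuasi.Im, ∀ (t : TmE Const Var) (φ : Fm Ag Const Var Atom),
    toNQuasi.tset φ ∈ N i w t → toNQuasi.tset (Fm.jbox i t φ) ∈ N i w (TmE.bang t)
  NOcs : ∀ (i : Ag) (t : TmO Const Var) (φ : Fm Ag Const Var Atom),
    Fm.obox i t φ ∈ CS.csO → ∀ w ∈ toNQuasi.Im, toNQuasi.tset φ ∈ NO i w t
  NOapp : ∀ (i : Ag), ∀ w ∈ toNQuasi.Im, ∀ (t s : TmO Const Var) (φ ψ : Fm Ag Const Var Atom),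
    toNQuasi.tset (φ.imp ψ) ∈ NO i w t → toNQuasi.tset φ ∈ NO i w s →
      toNQuasi.tset ψ ∈ NO i w (TmO.times t s)
  NOnoc : ∀ (i : Ag), ∀ w ∈ toNQuasi.Im, ∀ (t : TmO Const Var) (φ : Fm Ag Const Var Atom),
    toNQuasi.tset φ ∈ NO i w t → toNQuasi.tset (Fm.neg φ) ∉ NO i w t
  NOfact : ∀ (i : Ag), ∀ w ∈ toNQuasi.Im, ∀ (t : TmO Const Var) (φ : Fm Ag Const Var Atom),
    toNQuasi.tset ((Fm.obox i t φ).imp φ) ∈ NO i w (TmO.ddag t)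

/-- Truth at a point of an interpreted-neighborhood system. -/
abbrev NIS.SatP {S : Type} {CS : ConstSpec Ag Const Var Atom}
    (I : NIS Ag Const Var Atom S CS) :
    Fm Ag Const Var Atom → (ℕ → S) → ℕ → Prop :=
  I.toNQuasi.SatP

/-- I ⊨ φ for an interpreted-neighborhood system. -/
def NIS.Valid {S : Type} {CS : ConstSpec Ag Const Var Atom}
    (I : NIS Ag Const Var Atom S CS) (φ : Fm Ag Const Var Atom) : Prop :=
  ∀ r ∈ I.R, ∀ n : ℕ, I.SatP φ r n

/-- ⊨^N_CS φ : validity in all interpreted-neighborhood systems for JTO_CS. -/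
def NValid (CS : ConstSpec Ag Const Var Atom) (φ : Fm Ag Const Var Atom) : Prop :=
  ∀ (S : Type) (I : NIS Ag Const Var Atom S CS), I.Valid φ

/-- T ⊨^N_CS φ : local consequence over interpreted-neighborhood systems. -/
def NConseq (CS : ConstSpec Ag Const Var Atom) (T : Set (Fm Ag Const Var Atom))
    (φ : Fm Ag Const Var Atom) : Prop :=
  ∀ (S : Type) (I : NIS Ag Const Var Atom S CS), ∀ r ∈ I.R, ∀ n : ℕ,
    (∀ ψ ∈ T, I.SatP ψ r n) → I.SatP φ r n

end JTO

namespace JTO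


variable {Ag Const Var Atom : Type} {CS : ConstSpec Ag Const Var Atom}

section Taut

variable (a b c d t s : Fm Ag Const Var Atom)

lemma taut_uncurry : Taut (((Fm.conj a c).imp b).imp (c.imp (a.imp b))) := by
  intro v h0 h1
  simp only [Fm.conj, Fm.disj, Fm.neg, h1, h0]
  cases v a <;> cases v b <;> cases v c <;> simp

lemma taut_contract : Taut ((c.imp (t.imp (t.imp b))).imp (c.imp (t.imp b))) := by
  intro v h0 h1
  simp only [h1, h0]
  cases v t <;> cases v b <;> cases v c <;> simp

lemma taut_pack : Taut ((c.imp (t.imp (a.imp b))).imp ((Fm.conj a c).imp (t.imp b))) := by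
  intro v h0 h1
  simp only [Fm.conj, Fm.disj, Fm.neg, h1, h0]
  cases v a <;> cases v b <;> cases v c <;> cases v t <;> simp

lemma taut_trans : Taut ((a.imp b).imp ((b.imp c).imp (a.imp c))) := by
  intro v h0 h1
  simp only [h1, h0]
  cases v a <;> cases v b <;> cases v c <;> simp

lemma taut_k : Taut ((c.imp (a.imp b)).imp ((c.imp a).imp (c.imp b))) := by
  intro v h0 h1
  simp only [h1, h0]
  cases v a <;> cases v b <;> cases v c <;> simp

lemma taut_weak : Taut (b.imp (a.imp b)) := by
  intro v h0 h1
  simp only [h1, h0]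
  cases v a <;> cases v b <;> simp

lemma taut_conj_left : Taut ((Fm.conj a c).imp a) := by
  intro v h0 h1
  simp only [Fm.conj, Fm.disj, Fm.neg, h1, h0]
  cases v a <;> cases v c <;> simp

lemma taut_conj_right : Taut ((Fm.conj a c).imp c) := by
  intro v h0 h1
  simp only [Fm.conj, Fm.disj, Fm.neg, h1, h0]
  cases v a <;> cases v c <;> simp

lemma taut_conj_mono : Taut ((c.imp d).imp ((Fm.conj a c).imp (Fm.conj a d))) := by
  intro v h0 h1
  simp only [Fm.conj, Fm.disj, Fm.neg, h1, h0]
  cases v a <;> cases v c <;> cases v d <;> simp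

lemma taut_top_intro : Taut (a.imp (Fm.top : Fm Ag Const Var Atom)) := by
  intro v h0 h1
  simp only [Fm.top, Fm.neg, h1, h0]
  cases v a <;> simp

lemma taut_id : Taut (a.imp a) := by
  intro v h0 h1
  simp only [h1]
  cases v a <;> simp

lemma taut_bot : Taut ((Fm.bot : Fm Ag Const Var Atom).imp a) := by
  intro v h0 h1
  simp only [h1, h0]
  simp

lemma taut_disj_inl : Taut (b.imp (Fm.disj b c)) := by
  intro v h0 h1
  simp only [Fm.disj, Fm.neg, h1, h0]
  cases v b <;> cases v c <;> simp

lemma taut_disj_in2 : Taut (a.imp (s.imp (Fm.disj b (Fm.conj a s)))) := by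
  intro v h0 h1
  simp only [Fm.disj, Fm.conj, Fm.neg, h1, h0]
  cases v a <;> cases v b <;> cases v s <;> simp

lemma taut_disj_elim : Taut ((Fm.disj a b).imp ((a.imp Fm.bot).imp b)) := by
  intro v h0 h1
  simp only [Fm.disj, Fm.neg, h1, h0]
  cases v a <;> cases v b <;> simp

lemma taut_biim_mp : Taut ((Fm.biim a b).imp (a.imp b)) := by
  intro v h0 h1
  simp only [Fm.biim, Fm.conj, Fm.disj, Fm.neg, h1, h0]
  cases v a <;> cases v b <;> simp

lemma taut_biim_mpr : Taut ((Fm.biim a b).imp (b.imp a)) := by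
  intro v h0 h1
  simp only [Fm.biim, Fm.conj, Fm.disj, Fm.neg, h1, h0]
  cases v a <;> cases v b <;> simp

lemma taut_not_both : Taut (a.imp ((a.imp Fm.bot).imp Fm.bot)) := by
  intro v h0 h1
  simp only [h1, h0]
  cases v a <;> simp

end Taut

/-- Deriv of a tautology. -/
lemma dtaut {φ : Fm Ag Const Var Atom} (h : Taut φ) : Deriv CS φ := Deriv.ax (IsAxiom.taut h)

lemma dtrans {a b c : Fm Ag Const Var Atom}
    (h1 : Deriv CS (a.imp b)) (h2 : Deriv CS (b.imp c)) : Deriv CS (a.imp c) :=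
  ((dtaut (taut_trans a b c)).mp h1).mp h2

lemma dK {c a b : Fm Ag Const Var Atom}
    (h1 : Deriv CS (c.imp (a.imp b))) (h2 : Deriv CS (c.imp a)) : Deriv CS (c.imp b) :=
  ((dtaut (taut_k a b c)).mp h1).mp h2

lemma deriv_conjList_append_left (L M : List (Fm Ag Const Var Atom)) :
    Deriv CS ((conjList (L ++ M)).imp (conjList L)) := by
  induction L with
  | nil => exact dtaut (taut_top_intro _)
  | cons a L ih =>
      simpa [conjList] using (dtaut (taut_conj_mono a (conjList (L ++ M)) (conjList L))).mp ih

lemma deriv_conjList_append_right (L M : List (Fm Ag Const Var Atom)) :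
    Deriv CS ((conjList (L ++ M)).imp (conjList M)) := by
  induction L with
  | nil => exact dtaut (taut_id _)
  | cons a L ih =>
      exact dtrans (dtaut (taut_conj_right a (conjList (L ++ M)))) ih

lemma derivFrom_of_deriv {T : Set (Fm Ag Const Var Atom)} {φ : Fm Ag Const Var Atom}
    (h : Deriv CS φ) : DerivFrom CS T φ :=
  ⟨[], by simp, (dtaut (taut_weak (conjList []) φ)).mp h⟩

lemma derivFrom_mem {T : Set (Fm Ag Const Var Atom)} {φ : Fm Ag Const Var Atom}
    (h : φ ∈ T) : DerivFrom CS T φ :=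
  ⟨[φ], by simpa using h, by simpa [conjList] using dtaut (taut_conj_left φ (conjList []))⟩

lemma derivFrom_mp {T : Set (Fm Ag Const Var Atom)} {φ ψ : Fm Ag Const Var Atom}
    (h1 : DerivFrom CS T (φ.imp ψ)) (h2 : DerivFrom CS T φ) : DerivFrom CS T ψ := by
  obtain ⟨M, hM, dM⟩ := h1
  obtain ⟨N, hN, dN⟩ := h2
  refine ⟨M ++ N, ?_, ?_⟩
  · intro x hx; rcases List.mem_append.1 hx with h | h
    · exact hM x h
    · exact hN x h
  · exact dK (dtrans (deriv_conjList_append_left M N) dM)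
      (dtrans (deriv_conjList_append_right M N) dN)

/-- Move a designated formula out of the premise list. -/
lemma deriv_extract {T : Set (Fm Ag Const Var Atom)} {θ : Fm Ag Const Var Atom} :
    ∀ (L : List (Fm Ag Const Var Atom)) (β : Fm Ag Const Var Atom),
      Deriv CS ((conjList L).imp β) → (∀ ψ ∈ L, ψ = θ ∨ ψ ∈ T) →
      ∃ M : List (Fm Ag Const Var Atom), (∀ ψ ∈ M, ψ ∈ T) ∧
        Deriv CS ((conjList M).imp (θ.imp β)) := by
  intro L
  induction L with
  | nil =>
      intro β h _
      exact ⟨[], by simp, dtrans h (dtaut (taut_weak θ β))⟩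
  | cons a L ih =>
      intro β h hmem
      have h' : Deriv CS ((conjList L).imp (a.imp β)) :=
        (dtaut (taut_uncurry a β (conjList L))).mp h
      rcases hmem a (by simp) with rfl | haT
      · obtain ⟨M, hM, dM⟩ := ih (a.imp β) h' (fun ψ hψ => hmem ψ (by simp [hψ]))
        exact ⟨M, hM, (dtaut (taut_contract β (conjList M) a)).mp dM⟩
      · obtain ⟨M, hM, dM⟩ := ih (a.imp β) h' (fun ψ hψ => hmem ψ (by simp [hψ]))
        refine ⟨a :: M, ?_, ?_⟩
        · intro ψ hψ; rcases List.mem_cons.1 hψ with rfl | hψ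
          · exact haT
          · exact hM ψ hψ
        · have dM' : Deriv CS ((conjList M).imp (θ.imp (a.imp β))) := by
            refine dtrans dM (dtaut ?_)
            intro v h0 h1
            simp only [h1, h0]
            cases v a <;> cases v β <;> cases v θ <;> simp
          exact (dtaut (taut_pack a β (conjList M) θ)).mp dM'

section MCSLemmas

variable {Γ Δ : Set (Fm Ag Const Var Atom)}

lemma mcs_consistent (hΓ : Γ ∈ MCS CS) : Consistent CS Γ := hΓ.1

lemma mcs_neg_imp_bot (hΓ : Γ ∈ MCS CS) {θ : Fm Ag Const Var Atom} (h : θ ∉ Γ) :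
    DerivFrom CS Γ (θ.imp Fm.bot) := by
  have hss : Γ ⊂ insert θ Γ := Set.ssubset_insert h
  have hinc : ¬ Consistent CS (insert θ Γ) := hΓ.2 _ hss
  simp only [Consistent, not_not] at hinc
  obtain ⟨L, hL, dL⟩ := hinc
  obtain ⟨M, hM, dM⟩ := deriv_extract L Fm.bot dL
    (fun ψ hψ => by simpa [Set.mem_insert_iff] using hL ψ hψ)
  exact ⟨M, hM, dM⟩

lemma mcs_closed (hΓ : Γ ∈ MCS CS) {θ : Fm Ag Const Var Atom}
    (h : DerivFrom CS Γ θ) : θ ∈ Γ := by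
  by_contra hθ
  exact hΓ.1 (derivFrom_mp (mcs_neg_imp_bot hΓ hθ) h)

lemma mcs_mp (hΓ : Γ ∈ MCS CS) {a b : Fm Ag Const Var Atom}
    (h : a ∈ Γ) (d : Deriv CS (a.imp b)) : b ∈ Γ :=
  mcs_closed hΓ (derivFrom_mp (derivFrom_of_deriv d) (derivFrom_mem h))

lemma mcs_not_both (hΓ : Γ ∈ MCS CS) {a : Fm Ag Const Var Atom}
    (h1 : a ∈ Γ) (h2 : a.imp Fm.bot ∈ Γ) : False :=
  hΓ.1 (derivFrom_mp (derivFrom_mem h2) (derivFrom_mem h1))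

lemma mcs_disj_elim (hΓ : Γ ∈ MCS CS) {a b : Fm Ag Const Var Atom}
    (h : Fm.disj a b ∈ Γ) : a ∈ Γ ∨ b ∈ Γ := by
  by_cases ha : a ∈ Γ
  · exact Or.inl ha
  · refine Or.inr (mcs_closed hΓ ?_)
    have d : DerivFrom CS Γ ((a.imp Fm.bot).imp b) :=
      derivFrom_mp (derivFrom_of_deriv (dtaut (taut_disj_elim a b))) (derivFrom_mem h)
    exact derivFrom_mp d (mcs_neg_imp_bot hΓ ha)

end MCSLemmas

/-- Unfolding a since-formula in an MCS. -/
lemma mcs_snce_unfold {Γ : Set (Fm Ag Const Var Atom)} (hΓ : Γ ∈ MCS CS)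
    {φ ψ : Fm Ag Const Var Atom} (h : Fm.snce φ ψ ∈ Γ) :
    ψ ∈ Γ ∨ (φ ∈ Γ ∧ Fm.sprev (Fm.snce φ ψ) ∈ Γ) := by
  have d1 : Deriv CS ((Fm.snce φ ψ).imp
      (Fm.disj ψ (Fm.conj φ (Fm.sprev (Fm.snce φ ψ))))) :=
    (dtaut (taut_biim_mp _ _)).mp (Deriv.ax (IsAxiom.snce2 φ ψ))
  have hd := mcs_mp hΓ h d1
  rcases mcs_disj_elim hΓ hd with h1 | h1
  · exact Or.inl h1
  · exact Or.inr ⟨mcs_mp hΓ h1 (dtaut (taut_conj_left _ _)),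
      mcs_mp hΓ h1 (dtaut (taut_conj_right _ _))⟩

lemma mcs_snce_of_psi {Γ : Set (Fm Ag Const Var Atom)} (hΓ : Γ ∈ MCS CS)
    {φ ψ : Fm Ag Const Var Atom} (h : ψ ∈ Γ) : Fm.snce φ ψ ∈ Γ := by
  have d2 : Deriv CS ((Fm.disj ψ (Fm.conj φ (Fm.sprev (Fm.snce φ ψ)))).imp (Fm.snce φ ψ)) :=
    (dtaut (taut_biim_mpr _ _)).mp (Deriv.ax (IsAxiom.snce2 φ ψ))
  exact mcs_mp hΓ (mcs_mp hΓ h (dtaut (taut_disj_inl ψ _))) d2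

lemma mcs_snce_of_step {Γ : Set (Fm Ag Const Var Atom)} (hΓ : Γ ∈ MCS CS)
    {φ ψ : Fm Ag Const Var Atom} (h1 : φ ∈ Γ) (h2 : Fm.sprev (Fm.snce φ ψ) ∈ Γ) :
    Fm.snce φ ψ ∈ Γ := by
  have d2 : Deriv CS ((Fm.disj ψ (Fm.conj φ (Fm.sprev (Fm.snce φ ψ)))).imp (Fm.snce φ ψ)) :=
    (dtaut (taut_biim_mpr _ _)).mp (Deriv.ax (IsAxiom.snce2 φ ψ))
  have hdisj : Fm.disj ψ (Fm.conj φ (Fm.sprev (Fm.snce φ ψ))) ∈ Γ :=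
    mcs_closed hΓ (derivFrom_mp
      (derivFrom_mp (derivFrom_of_deriv (dtaut (taut_disj_in2 φ ψ _))) (derivFrom_mem h1))
      (derivFrom_mem h2))
  exact mcs_mp hΓ hdisj d2

/-- Transfer a strong-previous formula back along R_○. -/
lemma mcs_sprev_back {Γ Δ : Set (Fm Ag Const Var Atom)}
    (hΓ : Γ ∈ MCS CS) (hΔ : Δ ∈ MCS CS)
    (hnext : {α : Fm Ag Const Var Atom | Fm.next α ∈ Γ} ⊆ Δ)
    {θ : Fm Ag Const Var Atom} (h : Fm.sprev θ ∈ Δ) : θ ∈ Γ := by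
  by_contra hθ
  have hneg : θ.imp Fm.bot ∈ Γ := mcs_closed hΓ (mcs_neg_imp_bot hΓ hθ)
  have h1 : Fm.next (Fm.sprev (Fm.neg θ)) ∈ Γ :=
    mcs_mp hΓ hneg (Deriv.ax (IsAxiom.fp (Fm.neg θ)))
  have h2 : Fm.sprev (Fm.neg θ) ∈ Δ := hnext h1
  have h3 : Fm.wprev (Fm.neg θ) ∈ Δ :=
    mcs_mp hΔ h2 (Deriv.ax (IsAxiom.sw (Fm.neg θ)))
  -- sprev θ = neg (wprev (neg θ)) = (wprev (neg θ)).imp bot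
  exact mcs_not_both hΔ h3 h

/-- Transfer forward along R_○. -/
lemma mcs_sprev_fwd {Γ Δ : Set (Fm Ag Const Var Atom)}
    (hΓ : Γ ∈ MCS CS)
    (hnext : {α : Fm Ag Const Var Atom | Fm.next α ∈ Γ} ⊆ Δ)
    {θ : Fm Ag Const Var Atom} (h : θ ∈ Γ) : Fm.sprev θ ∈ Δ :=
  hnext (mcs_mp hΓ h (Deriv.ax (IsAxiom.fp θ)))

/-- No strong-previous formula holds at time 0. -/
lemma mcs_no_sprev_zero {Γ : Set (Fm Ag Const Var Atom)} (hΓ : Γ ∈ MCS CS)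
    (hz : Fm.wprev Fm.bot ∈ Γ) {θ : Fm Ag Const Var Atom}
    (h : Fm.sprev θ ∈ Γ) : False := by
  have d : Deriv CS ((Fm.wprev (Fm.bot : Fm Ag Const Var Atom)).imp (Fm.wprev (Fm.neg θ))) :=
    (Deriv.ax (IsAxiom.wprevK Fm.bot (Fm.neg θ))).mp
      (Deriv.necWPrev (dtaut (taut_bot (Fm.neg θ))))
  exact mcs_not_both hΓ (mcs_mp hΓ hz d) h

section Subf

lemma subf_self (φ : Fm Ag Const Var Atom) : φ ∈ Fm.subf φ := by
  cases φ <;> simp [Fm.subf]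

lemma subf_trans : ∀ (β α : Fm Ag Const Var Atom), α ∈ Fm.subf β → Fm.subf α ⊆ Fm.subf β := by
  intro β
  induction β with
  | atom p => intro α h; simp [Fm.subf] at h; subst h; simp [Fm.subf]
  | bot => intro α h; simp [Fm.subf] at h; subst h; simp [Fm.subf]
  | imp φ ψ ih1 ih2 =>
      intro α h
      simp only [Fm.subf, Set.mem_insert_iff, Set.mem_union] at h
      rcases h with rfl | h | h
      · exact subset_rfl
      · exact (ih1 α h).trans (by intro x hx; simp [Fm.subf]; tauto)
      · exact (ih2 α h).trans (by intro x hx; simp [Fm.subf]; tauto)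
  | next φ ih =>
      intro α h
      simp only [Fm.subf, Set.mem_insert_iff] at h
      rcases h with rfl | h
      · exact subset_rfl
      · exact (ih α h).trans (by intro x hx; simp [Fm.subf]; tauto)
  | wprev φ ih =>
      intro α h
      simp only [Fm.subf, Set.mem_insert_iff] at h
      rcases h with rfl | h
      · exact subset_rfl
      · exact (ih α h).trans (by intro x hx; simp [Fm.subf]; tauto)
  | untl φ ψ ih1 ih2 =>
      intro α h
      simp only [Fm.subf, Set.mem_insert_iff, Set.mem_union] at h
      rcases h with rfl | h | h
      · exact subset_rfl
      · exact (ih1 α h).trans (by intro x hx; simp [Fm.subf]; tauto)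
      · exact (ih2 α h).trans (by intro x hx; simp [Fm.subf]; tauto)
  | snce φ ψ ih1 ih2 =>
      intro α h
      simp only [Fm.subf, Set.mem_insert_iff, Set.mem_union] at h
      rcases h with rfl | h | h
      · exact subset_rfl
      · exact (ih1 α h).trans (by intro x hx; simp [Fm.subf]; tauto)
      · exact (ih2 α h).trans (by intro x hx; simp [Fm.subf]; tauto)
  | jbox i t φ ih =>
      intro α h
      simp only [Fm.subf, Set.mem_insert_iff] at h
      rcases h with rfl | h
      · exact subset_rfl
      · exact (ih α h).trans (by intro x hx; simp [Fm.subf]; tauto)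
  | obox i t φ ih =>
      intro α h
      simp only [Fm.subf, Set.mem_insert_iff] at h
      rcases h with rfl | h
      · exact subset_rfl
      · exact (ih α h).trans (by intro x hx; simp [Fm.subf]; tauto)

lemma snce_subfPlus_parts {χ φ ψ : Fm Ag Const Var Atom}
    (h : Fm.snce φ ψ ∈ Fm.subfPlus χ) : φ ∈ Fm.subfPlus χ ∧ ψ ∈ Fm.subfPlus χ := by
  have hA : Fm.snce φ ψ ∈ Fm.subf χ ∪ Fm.subf (Fm.snce Fm.top (Fm.wprev Fm.bot)) := by
    rcases h with h | ⟨x, _, hx⟩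
    · exact h
    · exact absurd hx (by simp [Fm.neg])
  have hφ : φ ∈ Fm.subf (Fm.snce φ ψ) := by
    simp [Fm.subf, subf_self φ]
  have hψ : ψ ∈ Fm.subf (Fm.snce φ ψ) := by
    simp [Fm.subf, subf_self ψ]
  rcases hA with h | h
  · exact ⟨Or.inl (Or.inl (subf_trans _ _ h hφ)), Or.inl (Or.inl (subf_trans _ _ h hψ))⟩
  · exact ⟨Or.inl (Or.inr (subf_trans _ _ h hφ)), Or.inl (Or.inr (subf_trans _ _ h hψ))⟩

end Subf

/-- since-formulas along an acceptable sequence. -/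
theorem acceptable_since (Ag Const Var Atom : Type)
    (CS : ConstSpec Ag Const Var Atom) (χ : Fm Ag Const Var Atom)
    (Xs : ℕ → Set (Fm Ag Const Var Atom)) (hXs : Acceptable CS χ Xs)
    (n : ℕ) (φ ψ : Fm Ag Const Var Atom) :
    (Fm.snce φ ψ ∈ Xs n →
      ∃ m, m ≤ n ∧ ψ ∈ Xs m ∧ ∀ k, m < k → k ≤ n → φ ∈ Xs k) ∧
    (Fm.snce φ ψ ∈ Fm.subfPlus χ →
      (∃ m, m ≤ n ∧ ψ ∈ Xs m ∧ ∀ k, m < k → k ≤ n → φ ∈ Xs k) →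
      Fm.snce φ ψ ∈ Xs n) := by
  obtain ⟨hmem, hR, hU, h0⟩ := hXs
  -- membership characterizations
  have hsubX : ∀ k, Xs k ⊆ Fm.subfPlus χ := fun k => (hmem k).1
  constructor
  · -- direction 1
    induction n with
    | zero =>
        intro h
        obtain ⟨Γ, hΓ, Δ, hΔ, hX0, hX1, hnext⟩ := hR 0
        have hsn : Fm.snce φ ψ ∈ Γ := by rw [hX0] at h; exact h.1
        have hz : Fm.wprev Fm.bot ∈ Γ := by rw [hX0] at h0; exact h0.1
        have hψS : ψ ∈ Fm.subfPlus χ := (snce_subfPlus_parts (hsubX 0 h)).2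
        rcases mcs_snce_unfold hΓ hsn with hψ | ⟨_, hs⟩
        · exact ⟨0, le_refl 0, by rw [hX0]; exact ⟨hψ, hψS⟩, fun k hk hk' => absurd (lt_of_lt_of_le hk hk') (lt_irrefl 0)⟩
        · exact absurd hs (fun hs => mcs_no_sprev_zero hΓ hz hs)
    | succ n ih =>
        intro h
        obtain ⟨Γ, hΓ, Δ, hΔ, hXn, hXn1, hnext⟩ := hR n
        have hsn : Fm.snce φ ψ ∈ Δ := by rw [hXn1] at h; exact h.1
        have hparts := snce_subfPlus_parts (hsubX (n+1) h)
        rcases mcs_snce_unfold hΔ hsn with hψ | ⟨hφ, hs⟩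
        · exact ⟨n+1, le_refl _, by rw [hXn1]; exact ⟨hψ, hparts.2⟩,
            fun k hk hk' => absurd (lt_of_lt_of_le hk hk') (lt_irrefl _)⟩
        · have hsnΓ : Fm.snce φ ψ ∈ Γ := mcs_sprev_back hΓ hΔ hnext hs
          have hsnXn : Fm.snce φ ψ ∈ Xs n := by rw [hXn]; exact ⟨hsnΓ, hsubX (n+1) h⟩
          obtain ⟨m, hm, hψm, hφk⟩ := ih hsnXn
          refine ⟨m, le_trans hm (Nat.le_succ n), hψm, fun k hk hk' => ?_⟩
          rcases Nat.lt_succ_iff_lt_or_eq.1 (Nat.lt_succ_of_le hk') with h' | rfl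
          · exact hφk k hk (by omega)
          · rw [hXn1]; exact ⟨hφ, hparts.1⟩
  · intro hS ⟨m, hm, hψm, hφk⟩
    have base : Fm.snce φ ψ ∈ Xs m := by
      obtain ⟨Γ, hΓ, Δ, hΔ, hXm, _, _⟩ := hR m
      rw [hXm] at hψm ⊢
      exact ⟨mcs_snce_of_psi hΓ hψm.1, hS⟩
    have step : ∀ j, Fm.snce φ ψ ∈ Xs j → φ ∈ Xs (j+1) → Fm.snce φ ψ ∈ Xs (j+1) := by
      intro j hj hφj
      obtain ⟨Γ, hΓ, Δ, hΔ, hXj, hXj1, hnext⟩ := hR j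
      rw [hXj] at hj
      rw [hXj1] at hφj ⊢
      have hs : Fm.sprev (Fm.snce φ ψ) ∈ Δ := mcs_sprev_fwd hΓ hnext hj.1
      exact ⟨mcs_snce_of_step hΔ hφj.1 hs, hS⟩
    have key : ∀ j, m + j ≤ n → Fm.snce φ ψ ∈ Xs (m + j) := by
      intro j
      induction j with
      | zero => intro _; exact base
      | succ j ihj =>
          intro hj
          exact step (m+j) (ihj (by omega)) (hφk (m+j+1) (by omega) (by omega))
    have := key (n - m) (by omega)
    rwa [show m + (n-m) = n by omega] at this


end JTO
end

section
/- (Truth Lemma) Let I be the χ-canonical F-interpreted system for JTO_CS. For every formula ψ ∈ Subf⁺(χ), every run r in its set of runs, and every n ∈ ℕ: (I,r,n) ⊨ ψ iff ψ ∈ r(n). -/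
/-!
A χ-maximal consistent set is the trace on Subf⁺(χ) of a maximal consistent set (by Lindenbaum's
lemma and χ-maximality), so membership questions about states reduce to maximal consistent sets.
There the axioms give the one-step laws: if Δ contains every φ with ○φ ∈ Γ, then ○φ ∈ Γ ↔ φ ∈ Δ,
φ ∈ Γ ↔ ⊙_w φ ∈ Δ, and φ U ψ, φ S ψ obey their fixpoint expansions; in a set containing ⊙_w⊥ every
⊙_w φ holds and φ S ψ reduces to ψ. Along an acceptable run, the expansion of S anchored at time 0
determines S completely, and the expansion of U together with the fulfilment of eventualities
determines U. For the justification assertions, the canonical evidence functions and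
accessibility relations are read off the same maximal consistent sets.
-/

namespace JTO

variable {Ag Const Var Atom : Type} {CS : ConstSpec Ag Const Var Atom}

theorem until_iff_of_expansion {u a b : ℕ → Prop}
    (hstep : ∀ n, u n ↔ b n ∨ a n ∧ u (n + 1))
    (hfulfil : ∀ n, u n → ∃ m, n ≤ m ∧ b m ∧ ∀ k, n ≤ k → k < m → a k) (n : ℕ) :
    u n ↔ ∃ m, n ≤ m ∧ b m ∧ ∀ k, n ≤ k → k < m → a k := by
  refine ⟨hfulfil n, ?_⟩
  rintro ⟨m, hnm, hb, ha⟩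
  induction hnm using Nat.decreasingInduction with
  | self => exact (hstep m).2 (.inl hb)
  | of_succ k hkm ih =>
    exact (hstep k).2 (.inr ⟨ha k le_rfl hkm, ih fun j hj hjm => ha j (by omega) hjm⟩)

theorem since_iff_of_expansion {s a b : ℕ → Prop} (h0 : s 0 ↔ b 0)
    (hstep : ∀ n, s (n + 1) ↔ b (n + 1) ∨ a (n + 1) ∧ s n) (n : ℕ) :
    s n ↔ ∃ m, m ≤ n ∧ b m ∧ ∀ k, m < k → k ≤ n → a k := by
  induction n with
  | zero =>
    simp only [Nat.le_zero, exists_eq_left, h0]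
    exact ⟨fun hb => ⟨hb, fun k hk hk0 => absurd hk0 (by omega)⟩, And.left⟩
  | succ n ih =>
    rw [hstep, ih]
    constructor
    · rintro (hb | ⟨ha, m, hmn, hb, hk⟩)
      · exact ⟨n + 1, le_rfl, hb, fun k h₁ h₂ => absurd h₂ (by omega)⟩
      · refine ⟨m, by omega, hb, fun k h₁ h₂ => ?_⟩
        rcases Nat.lt_or_eq_of_le h₂ with h₂ | rfl
        exacts [hk k h₁ (by omega), ha]
    · rintro ⟨m, hmn, hb, hk⟩
      rcases Nat.lt_or_eq_of_le hmn with hmn | rfl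
      · exact .inr ⟨hk _ hmn le_rfl, m, by omega, hb, fun k h₁ h₂ => hk k h₁ (by omega)⟩
      · exact .inl hb

section Tautologies

variable (a b c : Fm Ag Const Var Atom)

lemma taut_K : Taut (a.imp (b.imp a)) := by
  intro v _ hv; simp only [hv]; cases v a <;> cases v b <;> rfl

lemma taut_S : Taut ((a.imp (b.imp c)).imp ((a.imp b).imp (a.imp c))) := by
  intro v _ hv; simp only [hv]; cases v a <;> cases v b <;> cases v c <;> rfl

lemma taut_imp_top : Taut (a.imp Fm.top) := by
  intro v h0 hv; simp only [Fm.top, Fm.neg, hv, h0]; cases v a <;> rfl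

lemma taut_bot_imp : Taut (Fm.bot.imp a) := by
  intro v h0 hv; simp only [hv, h0]; rfl

lemma taut_dni : Taut (a.imp (Fm.neg (Fm.neg a))) := by
  intro v h0 hv; simp only [Fm.neg, hv, h0]; cases v a <;> rfl

lemma taut_conj_elim_left : Taut ((a.conj b).imp a) := by
  intro v h0 hv; simp only [Fm.conj, Fm.disj, Fm.neg, hv, h0]; cases v a <;> cases v b <;> rfl

lemma taut_conj_elim_right : Taut ((a.conj b).imp b) := by
  intro v h0 hv; simp only [Fm.conj, Fm.disj, Fm.neg, hv, h0]; cases v a <;> cases v b <;> rfl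

lemma taut_imp_conj : Taut ((a.imp b).imp ((a.imp c).imp (a.imp (b.conj c)))) := by
  intro v h0 hv; simp only [Fm.conj, Fm.disj, Fm.neg, hv, h0]
  cases v a <;> cases v b <;> cases v c <;> rfl

lemma taut_curry : Taut (((a.conj b).imp c).imp (b.imp (a.imp c))) := by
  intro v h0 hv; simp only [Fm.conj, Fm.disj, Fm.neg, hv, h0]
  cases v a <;> cases v b <;> cases v c <;> rfl

end Tautologies

section Derivations

variable {φ ψ θ : Fm Ag Const Var Atom}

lemma Deriv.of_taut (h : Taut φ) : Deriv CS φ := Deriv.ax (IsAxiom.taut h)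

lemma Deriv.imp_trans (h₁ : Deriv CS (φ.imp ψ)) (h₂ : Deriv CS (ψ.imp θ)) :
    Deriv CS (φ.imp θ) :=
  .mp (.mp (.of_taut (taut_S φ ψ θ)) (.mp (.of_taut (taut_K _ φ)) h₂)) h₁

lemma Deriv.wprev_imp_wprev (h : Deriv CS (φ.imp ψ)) :
    Deriv CS ((Fm.wprev φ).imp (Fm.wprev ψ)) :=
  .mp (.ax (IsAxiom.wprevK φ ψ)) (.necWPrev h)

lemma Deriv.conjList_imp_of_mem {L : List (Fm Ag Const Var Atom)} (h : φ ∈ L) :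
    Deriv CS ((conjList L).imp φ) := by
  induction L with
  | nil => cases h
  | cons ψ L ih =>
    rcases List.mem_cons.1 h with rfl | h
    · exact .of_taut (taut_conj_elim_left _ _)
    · exact (Deriv.of_taut (taut_conj_elim_right _ _)).imp_trans (ih h)

lemma Deriv.conjList_imp_conjList {L L' : List (Fm Ag Const Var Atom)} (h : L ⊆ L') :
    Deriv CS ((conjList L').imp (conjList L)) := by
  induction L with
  | nil => exact .of_taut (taut_imp_top _)
  | cons φ L ih =>
    obtain ⟨hφ, hL⟩ := List.cons_subset.1 h
    exact .mp (.mp (.of_taut (taut_imp_conj _ _ _)) (conjList_imp_of_mem hφ)) (ih hL)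

end Derivations

section DerivFrom

variable {T : Set (Fm Ag Const Var Atom)} {φ ψ : Fm Ag Const Var Atom}

lemma DerivFrom.of_deriv (h : Deriv CS φ) : DerivFrom CS T φ :=
  ⟨[], by simp, .mp (.of_taut (taut_K φ Fm.top)) h⟩

lemma DerivFrom.of_mem (h : φ ∈ T) : DerivFrom CS T φ :=
  ⟨[φ], by simpa using h, .of_taut (taut_conj_elim_left φ Fm.top)⟩

lemma DerivFrom.mono {T' : Set (Fm Ag Const Var Atom)} (hT : T ⊆ T') (h : DerivFrom CS T φ) :
    DerivFrom CS T' φ :=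
  let ⟨L, hL, d⟩ := h
  ⟨L, fun θ hθ => hT (hL θ hθ), d⟩

lemma DerivFrom.mp (h₁ : DerivFrom CS T (φ.imp ψ)) (h₂ : DerivFrom CS T φ) :
    DerivFrom CS T ψ := by
  obtain ⟨L₁, hL₁, d₁⟩ := h₁
  obtain ⟨L₂, hL₂, d₂⟩ := h₂
  refine ⟨L₁ ++ L₂, by simpa [or_imp, forall_and] using And.intro hL₁ hL₂, ?_⟩
  have e₁ : Deriv CS ((conjList (L₁ ++ L₂)).imp (φ.imp ψ)) :=
    (Deriv.conjList_imp_conjList (List.subset_append_left L₁ L₂)).imp_trans d₁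
  have e₂ : Deriv CS ((conjList (L₁ ++ L₂)).imp φ) :=
    (Deriv.conjList_imp_conjList (List.subset_append_right L₁ L₂)).imp_trans d₂
  exact .mp (.mp (.of_taut (taut_S _ φ ψ)) e₁) e₂

theorem DerivFrom.deduction (h : DerivFrom CS (insert φ T) ψ) : DerivFrom CS T (φ.imp ψ) := by
  classical
  obtain ⟨L, hL, d⟩ := h
  refine ⟨L.filter (· ∈ T), fun θ hθ => by simpa using (List.mem_filter.1 hθ).2, ?_⟩
  have hsub : L ⊆ φ :: L.filter (· ∈ T) := fun θ hθ => by
    rcases hL θ hθ with rfl | hθT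
    · exact List.mem_cons_self
    · exact List.mem_cons_of_mem _ (List.mem_filter.2 ⟨hθ, by simpa using hθT⟩)
  exact .mp (.of_taut (taut_curry _ _ _)) ((Deriv.conjList_imp_conjList hsub).imp_trans d)

lemma Consistent.mono {T' : Set (Fm Ag Const Var Atom)} (hT : T ⊆ T') (h : Consistent CS T') :
    Consistent CS T :=
  fun hd => h (hd.mono hT)

end DerivFrom

section MaximalConsistent

variable {Γ Δ T : Set (Fm Ag Const Var Atom)} {φ ψ : Fm Ag Const Var Atom}

lemma mem_of_derivFrom (hΓ : Γ ∈ MCS CS) (h : DerivFrom CS Γ φ) : φ ∈ Γ := by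
  by_contra hφ
  exact hΓ.1 ((not_not.1 (hΓ.2 _ (Set.ssubset_insert hφ))).deduction.mp h)

lemma mem_of_deriv (hΓ : Γ ∈ MCS CS) (h : Deriv CS φ) : φ ∈ Γ :=
  mem_of_derivFrom hΓ (.of_deriv h)

lemma mem_of_deriv_imp (hΓ : Γ ∈ MCS CS) (h : Deriv CS (φ.imp ψ)) (hφ : φ ∈ Γ) :
    ψ ∈ Γ :=
  mem_of_derivFrom hΓ ((DerivFrom.of_deriv h).mp (.of_mem hφ))

lemma bot_not_mem (hΓ : Γ ∈ MCS CS) : Fm.bot ∉ Γ :=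
  fun h => hΓ.1 (.of_mem h)

lemma mem_imp_iff (hΓ : Γ ∈ MCS CS) : φ.imp ψ ∈ Γ ↔ (φ ∈ Γ → ψ ∈ Γ) := by
  refine ⟨fun h hφ => mem_of_derivFrom hΓ ((DerivFrom.of_mem h).mp (.of_mem hφ)),
    fun h => mem_of_derivFrom hΓ (DerivFrom.deduction ?_)⟩
  by_cases hφ : φ ∈ Γ
  · exact .of_mem (Set.mem_insert_of_mem _ (h hφ))
  · exact (DerivFrom.of_deriv (.of_taut (taut_bot_imp ψ))).mp
      (not_not.1 (hΓ.2 _ (Set.ssubset_insert hφ)))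

lemma mem_neg_iff (hΓ : Γ ∈ MCS CS) : Fm.neg φ ∈ Γ ↔ φ ∉ Γ := by
  simp only [Fm.neg, mem_imp_iff hΓ, bot_not_mem hΓ, imp_false]

lemma mem_disj_iff (hΓ : Γ ∈ MCS CS) : φ.disj ψ ∈ Γ ↔ φ ∈ Γ ∨ ψ ∈ Γ := by
  rw [Fm.disj, mem_imp_iff hΓ, mem_neg_iff hΓ, or_iff_not_imp_left]

lemma mem_conj_iff (hΓ : Γ ∈ MCS CS) : φ.conj ψ ∈ Γ ↔ φ ∈ Γ ∧ ψ ∈ Γ := by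
  simp only [Fm.conj, mem_neg_iff hΓ, mem_disj_iff hΓ]
  tauto

lemma mem_biim_iff (hΓ : Γ ∈ MCS CS) : φ.biim ψ ∈ Γ ↔ (φ ∈ Γ ↔ ψ ∈ Γ) := by
  rw [Fm.biim, mem_conj_iff hΓ, mem_imp_iff hΓ, mem_imp_iff hΓ, ← iff_iff_implies_and_implies]

theorem exists_mcs_superset (hT : Consistent CS T) : ∃ Γ ∈ MCS CS, T ⊆ Γ := by
  have hchain : ∀ c ⊆ {Δ | Consistent CS Δ}, IsChain (· ⊆ ·) c → c.Nonempty →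
      ∃ ub ∈ {Δ | Consistent CS Δ}, ∀ s ∈ c, s ⊆ ub := by
    intro c hc hchain hne
    refine ⟨⋃₀ c, fun ⟨L, hL, d⟩ => ?_, fun s hs => Set.subset_sUnion_of_mem hs⟩
    obtain ⟨Δ, hΔ, hLΔ⟩ := hchain.directedOn.exists_mem_subset_of_finite_of_subset_sUnion hne
      (List.finite_toSet L) hL
    exact hc hΔ ⟨L, hLΔ, d⟩
  obtain ⟨Γ, hTΓ, hmax⟩ := zorn_subset_nonempty _ hchain T hT
  exact ⟨Γ, ⟨hmax.1, fun Δ hΓΔ hΔ => hΓΔ.2 (hmax.2 hΔ hΓΔ.1)⟩, hTΓ⟩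

end MaximalConsistent

section Successor

variable {Γ Δ : Set (Fm Ag Const Var Atom)} {φ ψ : Fm Ag Const Var Atom}
  (hΓ : Γ ∈ MCS CS) (hΔ : Δ ∈ MCS CS) (hsucc : {φ | Fm.next φ ∈ Γ} ⊆ Δ)
include hΓ hΔ hsucc

lemma next_mem_iff_of_succ : Fm.next φ ∈ Γ ↔ φ ∈ Δ := by
  refine ⟨fun h => hsucc h, fun h => by_contra fun hn => ?_⟩
  have hfn := (mem_biim_iff hΓ).1 (mem_of_deriv hΓ (.ax (IsAxiom.fn φ)))
  exact (mem_neg_iff hΔ).1 (hsucc (hfn.2 ((mem_neg_iff hΓ).2 hn))) h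

lemma mem_iff_wprev_mem_of_succ : φ ∈ Γ ↔ Fm.wprev φ ∈ Δ := by
  have hsprev : ∀ θ ∈ Γ, Fm.sprev θ ∈ Δ := fun θ h =>
    hsucc (show Fm.next (Fm.sprev θ) ∈ Γ from mem_of_deriv_imp hΓ (.ax (.fp θ)) h)
  refine ⟨fun h => mem_of_deriv_imp hΔ (.ax (.sw φ)) (hsprev φ h),
    fun h => by_contra fun hn => ?_⟩
  have hnn : Fm.wprev (Fm.neg (Fm.neg φ)) ∈ Δ :=
    mem_of_deriv_imp hΔ (Deriv.of_taut (taut_dni φ)).wprev_imp_wprev h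
  exact (mem_neg_iff hΔ).1 (hsprev _ ((mem_neg_iff hΓ).2 hn)) hnn

lemma mem_iff_sprev_mem_of_succ : φ ∈ Γ ↔ Fm.sprev φ ∈ Δ := by
  rw [Fm.sprev, mem_neg_iff hΔ, ← mem_iff_wprev_mem_of_succ hΓ hΔ hsucc, mem_neg_iff hΓ,
    not_not]

lemma untl_mem_iff_of_succ :
    Fm.untl φ ψ ∈ Γ ↔ ψ ∈ Γ ∨ φ ∈ Γ ∧ Fm.untl φ ψ ∈ Δ := by
  rw [(mem_biim_iff hΓ).1 (mem_of_deriv hΓ (.ax (.untl2 φ ψ))), mem_disj_iff hΓ,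
    mem_conj_iff hΓ, next_mem_iff_of_succ hΓ hΔ hsucc]

lemma snce_mem_iff_of_succ :
    Fm.snce φ ψ ∈ Δ ↔ ψ ∈ Δ ∨ φ ∈ Δ ∧ Fm.snce φ ψ ∈ Γ := by
  rw [(mem_biim_iff hΔ).1 (mem_of_deriv hΔ (.ax (.snce2 φ ψ))), mem_disj_iff hΔ,
    mem_conj_iff hΔ, ← mem_iff_sprev_mem_of_succ hΓ hΔ hsucc]

end Successor

section Initial

variable {Γ : Set (Fm Ag Const Var Atom)} {φ ψ : Fm Ag Const Var Atom}
  (hΓ : Γ ∈ MCS CS) (h0 : Fm.wprev Fm.bot ∈ Γ)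
include hΓ h0

lemma wprev_mem_of_initial : Fm.wprev φ ∈ Γ :=
  mem_of_deriv_imp hΓ (Deriv.of_taut (taut_bot_imp φ)).wprev_imp_wprev h0

lemma snce_mem_iff_of_initial : Fm.snce φ ψ ∈ Γ ↔ ψ ∈ Γ := by
  have hsprev : Fm.sprev (Fm.snce φ ψ) ∉ Γ := by
    rw [Fm.sprev, mem_neg_iff hΓ, not_not]
    exact wprev_mem_of_initial hΓ h0
  rw [(mem_biim_iff hΓ).1 (mem_of_deriv hΓ (.ax (.snce2 φ ψ))), mem_disj_iff hΓ,
    mem_conj_iff hΓ]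
  simp [hsprev]

end Initial

namespace Fm

variable {χ φ ψ : Fm Ag Const Var Atom}

@[simp]
lemma mem_subf_self (φ : Fm Ag Const Var Atom) : φ ∈ φ.subf := by
  cases φ <;> simp [subf]

lemma subf_subset_of_mem (h : ψ ∈ φ.subf) : ψ.subf ⊆ φ.subf := by
  induction φ with
  | atom | bot => rw [Set.mem_singleton_iff.1 h]
  | imp _ _ iha ihb | untl _ _ iha ihb | snce _ _ iha ihb =>
    rcases h with rfl | h | h
    exacts [subset_rfl, (iha h).trans fun _ hx => .inr (.inl hx),
      (ihb h).trans fun _ hx => .inr (.inr hx)]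
  | next _ ih | wprev _ ih | jbox _ _ _ ih | obox _ _ _ ih =>
    rcases h with rfl | h
    exacts [subset_rfl, (ih h).trans fun _ hx => .inr hx]

lemma mem_subfPlus_of_mem_subf (h : φ ∈ subfPlus χ) (hψ : ψ ∈ φ.subf := by simp [Fm.subf]) :
    ψ ∈ subfPlus χ := by
  have hA : ∀ {α}, α ∈ χ.subf ∪ (snce top (wprev bot)).subf →
      α.subf ⊆ χ.subf ∪ (snce top (wprev bot)).subf := by
    rintro α (h | h)
    exacts [(subf_subset_of_mem h).trans Set.subset_union_left,
      (subf_subset_of_mem h).trans Set.subset_union_right]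
  rcases h with h | ⟨α, hα, rfl⟩
  · exact .inl (hA h hψ)
  · rcases hψ with rfl | hψ | hψ
    · exact .inr ⟨α, hα, rfl⟩
    · exact .inl (hA hα hψ)
    · exact .inl (.inr (by simp_all [subf, top, neg]))

end Fm

section Restriction

variable {χ φ ψ : Fm Ag Const Var Atom} {X Y : Set (Fm Ag Const Var Atom)}

lemma exists_mcs_of_mem_MCSx (hX : X ∈ MCSx CS χ) :
    ∃ Γ ∈ MCS CS, X = Γ ∩ Fm.subfPlus χ := by
  obtain ⟨Γ, hΓ, hXΓ⟩ := exists_mcs_superset hX.2.1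
  refine ⟨Γ, hΓ, by_contra fun hne => ?_⟩
  exact hX.2.2 _ Set.inter_subset_right ((Set.subset_inter hXΓ hX.1).ssubset_of_ne hne)
    (hΓ.1.mono Set.inter_subset_left)

lemma bot_not_mem_of_mem_MCSx (hX : X ∈ MCSx CS χ) : Fm.bot ∉ X :=
  fun h => hX.2.1 (.of_mem h)

lemma imp_mem_iff_of_mem_MCSx (hX : X ∈ MCSx CS χ) (h : φ.imp ψ ∈ Fm.subfPlus χ) :
    φ.imp ψ ∈ X ↔ (φ ∈ X → ψ ∈ X) := by
  obtain ⟨Γ, hΓ, rfl⟩ := exists_mcs_of_mem_MCSx hX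
  have hφ : φ ∈ Fm.subfPlus χ := Fm.mem_subfPlus_of_mem_subf h
  have hψ : ψ ∈ Fm.subfPlus χ := Fm.mem_subfPlus_of_mem_subf h
  simp only [Set.mem_inter_iff, h, hφ, hψ, and_true]
  exact mem_imp_iff hΓ

lemma wprev_mem_of_initial_of_mem_MCSx (hX : X ∈ MCSx CS χ) (h0 : Fm.wprev Fm.bot ∈ X)
    (h : Fm.wprev φ ∈ Fm.subfPlus χ) : Fm.wprev φ ∈ X := by
  obtain ⟨Γ, hΓ, rfl⟩ := exists_mcs_of_mem_MCSx hX
  exact ⟨wprev_mem_of_initial hΓ h0.1, h⟩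

lemma snce_mem_iff_of_initial_of_mem_MCSx (hX : X ∈ MCSx CS χ) (h0 : Fm.wprev Fm.bot ∈ X)
    (h : Fm.snce φ ψ ∈ Fm.subfPlus χ) : Fm.snce φ ψ ∈ X ↔ ψ ∈ X := by
  obtain ⟨Γ, hΓ, rfl⟩ := exists_mcs_of_mem_MCSx hX
  have hψ : ψ ∈ Fm.subfPlus χ := Fm.mem_subfPlus_of_mem_subf h
  simp only [Set.mem_inter_iff, h, hψ, and_true]
  exact snce_mem_iff_of_initial hΓ h0.1

namespace Rnext

variable (hR : Rnext CS χ X Y)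
include hR

lemma next_mem_iff (h : Fm.next φ ∈ Fm.subfPlus χ) : Fm.next φ ∈ X ↔ φ ∈ Y := by
  obtain ⟨Γ, hΓ, Δ, hΔ, rfl, rfl, hsucc⟩ := hR
  have hφ : φ ∈ Fm.subfPlus χ := Fm.mem_subfPlus_of_mem_subf h
  simp only [Set.mem_inter_iff, h, hφ, and_true]
  exact next_mem_iff_of_succ hΓ hΔ hsucc

lemma mem_iff_wprev_mem (h : Fm.wprev φ ∈ Fm.subfPlus χ) : φ ∈ X ↔ Fm.wprev φ ∈ Y := by
  obtain ⟨Γ, hΓ, Δ, hΔ, rfl, rfl, hsucc⟩ := hR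
  have hφ : φ ∈ Fm.subfPlus χ := Fm.mem_subfPlus_of_mem_subf h
  simp only [Set.mem_inter_iff, h, hφ, and_true]
  exact mem_iff_wprev_mem_of_succ hΓ hΔ hsucc

lemma untl_mem_iff (h : Fm.untl φ ψ ∈ Fm.subfPlus χ) :
    Fm.untl φ ψ ∈ X ↔ ψ ∈ X ∨ φ ∈ X ∧ Fm.untl φ ψ ∈ Y := by
  obtain ⟨Γ, hΓ, Δ, hΔ, rfl, rfl, hsucc⟩ := hR
  have hφ : φ ∈ Fm.subfPlus χ := Fm.mem_subfPlus_of_mem_subf h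
  have hψ : ψ ∈ Fm.subfPlus χ := Fm.mem_subfPlus_of_mem_subf h
  simp only [Set.mem_inter_iff, h, hφ, hψ, and_true]
  exact untl_mem_iff_of_succ hΓ hΔ hsucc

lemma snce_mem_iff (h : Fm.snce φ ψ ∈ Fm.subfPlus χ) :
    Fm.snce φ ψ ∈ Y ↔ ψ ∈ Y ∨ φ ∈ Y ∧ Fm.snce φ ψ ∈ X := by
  obtain ⟨Γ, hΓ, Δ, hΔ, rfl, rfl, hsucc⟩ := hR
  have hφ : φ ∈ Fm.subfPlus χ := Fm.mem_subfPlus_of_mem_subf h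
  have hψ : ψ ∈ Fm.subfPlus χ := Fm.mem_subfPlus_of_mem_subf h
  simp only [Set.mem_inter_iff, h, hφ, hψ, and_true]
  exact snce_mem_iff_of_succ hΓ hΔ hsucc

end Rnext

end Restriction

namespace Acceptable

variable {χ φ ψ : Fm Ag Const Var Atom} {X : ℕ → Set (Fm Ag Const Var Atom)}
  (hA : Acceptable CS χ X)
include hA

lemma next_mem_iff (h : Fm.next φ ∈ Fm.subfPlus χ) (n : ℕ) :
    Fm.next φ ∈ X n ↔ φ ∈ X (n + 1) :=
  (hA.2.1 n).next_mem_iff h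

lemma wprev_mem_iff (h : Fm.wprev φ ∈ Fm.subfPlus χ) :
    ∀ n, Fm.wprev φ ∈ X n ↔ n = 0 ∨ φ ∈ X (n - 1)
  | 0 => iff_of_true (wprev_mem_of_initial_of_mem_MCSx (hA.1 0) hA.2.2.2 h) (.inl rfl)
  | n + 1 => by simp [(hA.2.1 n).mem_iff_wprev_mem h]

lemma untl_mem_iff (h : Fm.untl φ ψ ∈ Fm.subfPlus χ) (n : ℕ) :
    Fm.untl φ ψ ∈ X n ↔ ∃ m, n ≤ m ∧ ψ ∈ X m ∧ ∀ k, n ≤ k → k < m → φ ∈ X k :=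
  until_iff_of_expansion (fun n => (hA.2.1 n).untl_mem_iff h) (fun n => hA.2.2.1 n φ ψ) n

lemma snce_mem_iff (h : Fm.snce φ ψ ∈ Fm.subfPlus χ) (n : ℕ) :
    Fm.snce φ ψ ∈ X n ↔ ∃ m, m ≤ n ∧ ψ ∈ X m ∧ ∀ k, m < k → k ≤ n → φ ∈ X k :=
  since_iff_of_expansion (s := (Fm.snce φ ψ ∈ X ·))
    (snce_mem_iff_of_initial_of_mem_MCSx (hA.1 0) hA.2.2.2 h) (fun n => (hA.2.1 n).snce_mem_iff h) n

end Acceptable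

section Canonical

variable {χ φ : Fm Ag Const Var Atom} {X Y : Set (Fm Ag Const Var Atom)} {i : Ag}

lemma mem_canE_iff {t : TmE Const Var} (hX : X ∈ MCSx CS χ)
    (h : Fm.jbox i t φ ∈ Fm.subfPlus χ) :
    φ ∈ canE CS χ i X t ↔ Fm.jbox i t φ ∈ X := by
  obtain ⟨Γ, hΓ, rfl⟩ := exists_mcs_of_mem_MCSx hX
  exact ⟨fun hφ => ⟨hφ Γ hΓ rfl, h⟩, fun hj Γ' _ hΓ' => (hΓ' ▸ hj).1⟩

lemma mem_of_canK {t : TmE Const Var} (hY : Y ∈ MCSx CS χ)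
    (h : Fm.jbox i t φ ∈ Fm.subfPlus χ) (hK : canK CS χ i X Y) (hj : Fm.jbox i t φ ∈ X) :
    φ ∈ Y := by
  obtain ⟨Δ, hΔ, rfl⟩ := exists_mcs_of_mem_MCSx hY
  obtain ⟨Γ, -, rfl, hsub⟩ := hK Δ hΔ rfl
  exact ⟨hsub ⟨t, hj.1⟩, Fm.mem_subfPlus_of_mem_subf h⟩

lemma mem_canEO_iff {t : TmO Const Var} (hX : X ∈ MCSx CS χ)
    (h : Fm.obox i t φ ∈ Fm.subfPlus χ) :
    φ ∈ canEO CS χ i X t ↔ Fm.obox i t φ ∈ X := by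
  obtain ⟨Γ, hΓ, rfl⟩ := exists_mcs_of_mem_MCSx hX
  exact ⟨fun hφ => ⟨hφ Γ hΓ rfl, h⟩, fun hj Γ' _ hΓ' => (hΓ' ▸ hj).1⟩

lemma mem_of_canKO {t : TmO Const Var} (h : Fm.obox i t φ ∈ Fm.subfPlus χ)
    (hK : canKO CS χ i X Y) (hj : Fm.obox i t φ ∈ X) : φ ∈ Y := by
  obtain ⟨Γ, -, Δ, -, rfl, rfl, hsub⟩ := hK
  exact ⟨hsub ⟨t, hj.1⟩, Fm.mem_subfPlus_of_mem_subf h⟩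

lemma canFQuasi_sat_jbox_iff {a : Fm Ag Const Var Atom} {t : TmE Const Var}
    (hψ : Fm.jbox i t a ∈ Fm.subfPlus χ)
    (ih : ∀ r ∈ (canFQuasi CS χ).R, ∀ n, (canFQuasi CS χ).Sat a r n ↔ a ∈ (r n).1)
    (r : ℕ → MCSx CS χ) (n : ℕ) :
    (canFQuasi CS χ).Sat (Fm.jbox i t a) r n ↔ Fm.jbox i t a ∈ (r n).1 := by
  have hE := mem_canE_iff (r n).2 hψ
  refine ⟨fun h => hE.1 h.1, fun h => ⟨hE.2 h, ?_⟩⟩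
  exact fun r' hr' n' hK => (ih r' hr' n').2 (mem_of_canK (r' n').2 hψ hK h)

lemma canFQuasi_sat_obox_iff {a : Fm Ag Const Var Atom} {t : TmO Const Var}
    (hψ : Fm.obox i t a ∈ Fm.subfPlus χ)
    (ih : ∀ r ∈ (canFQuasi CS χ).R, ∀ n, (canFQuasi CS χ).Sat a r n ↔ a ∈ (r n).1)
    (r : ℕ → MCSx CS χ) (n : ℕ) :
    (canFQuasi CS χ).Sat (Fm.obox i t a) r n ↔ Fm.obox i t a ∈ (r n).1 := by
  have hE := mem_canEO_iff (r n).2 hψ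
  refine ⟨fun h => hE.1 h.1, fun h => ⟨hE.2 h, ?_⟩⟩
  exact fun r' hr' n' hK => (ih r' hr' n').2 (mem_of_canKO hψ hK h)

end Canonical

/-- Truth Lemma: in the χ-canonical F-interpreted system, a formula of
Subf⁺(χ) is true at a point (r, n) iff it belongs to the state r(n). -/
theorem truth_lemma (Ag Const Var Atom : Type)
    (CS : ConstSpec Ag Const Var Atom) (χ : Fm Ag Const Var Atom) :
    ∀ ψ ∈ Fm.subfPlus χ, ∀ r ∈ (canFQuasi CS χ).R, ∀ n : ℕ,
      ((canFQuasi CS χ).Sat ψ r n ↔ ψ ∈ (r n : Set (Fm Ag Const Var Atom))) := by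
  intro ψ hψ
  induction ψ with
  | atom p => exact fun _ _ _ => Iff.rfl
  | bot => exact fun r _ n => iff_of_false id (bot_not_mem_of_mem_MCSx (r n).2)
  | imp a b iha ihb =>
    intro r hr n
    simp only [FQuasi.Sat, iha (Fm.mem_subfPlus_of_mem_subf hψ) r hr,
      ihb (Fm.mem_subfPlus_of_mem_subf hψ) r hr]
    exact (imp_mem_iff_of_mem_MCSx (r n).2 hψ).symm
  | next a ih =>
    intro r hr n
    simp only [FQuasi.Sat, ih (Fm.mem_subfPlus_of_mem_subf hψ) r hr]
    exact (Acceptable.next_mem_iff hr hψ n).symm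
  | wprev a ih =>
    intro r hr n
    simp only [FQuasi.Sat, ih (Fm.mem_subfPlus_of_mem_subf hψ) r hr]
    exact (Acceptable.wprev_mem_iff hr hψ n).symm
  | untl a b iha ihb =>
    intro r hr n
    simp only [FQuasi.Sat, iha (Fm.mem_subfPlus_of_mem_subf hψ) r hr,
      ihb (Fm.mem_subfPlus_of_mem_subf hψ) r hr]
    exact (Acceptable.untl_mem_iff hr hψ n).symm
  | snce a b iha ihb =>
    intro r hr n
    simp only [FQuasi.Sat, iha (Fm.mem_subfPlus_of_mem_subf hψ) r hr,
      ihb (Fm.mem_subfPlus_of_mem_subf hψ) r hr]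
    exact (Acceptable.snce_mem_iff hr hψ n).symm
  | jbox i t a ih =>
    exact fun r _ => canFQuasi_sat_jbox_iff hψ (ih (Fm.mem_subfPlus_of_mem_subf hψ)) r
  | obox i t a ih =>
    exact fun r _ => canFQuasi_sat_obox_iff hψ (ih (Fm.mem_subfPlus_of_mem_subf hψ)) r

end JTO
end
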